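/- arXiv:2511.03145 — 3 statements merged into one kernel-verified Lean document; each statement's English description precedes it below -/
import Mathlib

section
/- For every finite player set N and every subset S ⊆ N, the function p*_{N\S}(π) = ∏_{B∈π} (|B|−1)!/(n−s)! (where n = |N|, s = |S|) defines a probability distribution on the set Π(N\S) of partitions of N\S, i.e., p*_{N\S}(π) ≥ 0 for all π and ∑_{π∈Π(N\S)} p*_{N\S}(π) = 1. -/
open Finset BigOperators

namespace TUX

/-- A (raw) game in partition function form: assigns a real worth to each
coalition together with a partition (of the outside players). -/
abbrev Game := Finset ℕ → Finset (Finset ℕ) → ℝ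

/-- A TU game (characteristic function). -/
abbrev TUGame := Finset ℕ → ℝ

/-- A solution for TUX games: given a player set and a game, assigns payoffs. -/
abbrev Sol := Finset ℕ → Game → ℕ → ℝ

/-- `w` is a genuine TUX game: the empty coalition has worth 0. -/
def IsTUX (w : Game) : Prop := ∀ π, w ∅ π = 0

/-- `π` is a partition of the finite set `M`. -/
def IsPartition (M : Finset ℕ) (π : Finset (Finset ℕ)) : Prop :=
  (∀ B ∈ π, B ⊆ M) ∧ ∅ ∉ π ∧ ∀ x ∈ M, (π.filter (fun B => x ∈ B)).card = 1

instance (M : Finset ℕ) : DecidablePred (IsPartition M) := fun π => by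
  unfold IsPartition; infer_instance

/-- The finite set of all partitions of `M`. -/
def partitionsOf (M : Finset ℕ) : Finset (Finset (Finset ℕ)) :=
  (M.powerset.powerset).filter (IsPartition M)

/-- The Ewens(θ = 1) probability of the partition `π` of `M`:
`p*_M(π) = ∏_{B ∈ π} (|B| - 1)! / |M|!`. -/
noncomputable def pstar (M : Finset ℕ) (π : Finset (Finset ℕ)) : ℝ :=
  (∏ B ∈ π, ((B.card - 1).factorial : ℝ)) / (M.card.factorial : ℝ)

/-- The block of `π` containing `j` (junk if `π` is not a partition containing `j`). -/
def blockOf (π : Finset (Finset ℕ)) (j : ℕ) : Finset ℕ :=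
  (π.filter (fun B => j ∈ B)).sup id

/-- Add player `i` to the block `B` of `π`. -/
def addToBlock (π : Finset (Finset ℕ)) (i : ℕ) (B : Finset ℕ) : Finset (Finset ℕ) :=
  insert (insert i B) (π.erase B)

/-- The restriction operator `r⋆` removing a single player `i` from a game on `N`:
`w₋ᵢ(S,π) = (1/(n-s)) (w(S, π₊ᵢ⇝∅) + ∑_{j ∈ N∖(S∪{i})} w(S, π₊ᵢ⇝π(j)))`. -/
noncomputable def restrict1 (N : Finset ℕ) (w : Game) (i : ℕ) : Game :=
  fun S π =>
    ((N.card : ℝ) - (S.card : ℝ))⁻¹ *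
      (w S (insert {i} π) + ∑ j ∈ (N \ S).erase i, w S (addToBlock π i (blockOf π j)))

/-- Iterated removal of a list of players. -/
noncomputable def restrictL : Finset ℕ → Game → List ℕ → Game
  | _, w, [] => w
  | N, w, i :: l => restrictL (N.erase i) (restrict1 N w i) l

/-- Removal of a set of players (via the increasing enumeration; by path
independence of `r⋆` the order is immaterial). -/
noncomputable def restrictSet (N : Finset ℕ) (w : Game) (T : Finset ℕ) : Game :=
  restrictL N w (T.sort (· ≤ ·))

/-- The average TU game `v̄_w` of a TUX game `w` on `N`. -/
noncomputable def avg (N : Finset ℕ) (w : Game) : TUGame :=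
  fun S => ∑ π ∈ partitionsOf (N \ S), pstar (N \ S) π * w S π

/-- The auxiliary TU game `v*_w(S) = w₋(N∖S)(S,∅)`. -/
noncomputable def auxGame (N : Finset ℕ) (w : Game) : TUGame :=
  fun S => restrictSet N w (N \ S) S ∅

/-- The Shapley value of a TU game on player set `N`. -/
noncomputable def shapley (N : Finset ℕ) (v : TUGame) (i : ℕ) : ℝ :=
  ∑ S ∈ (N.erase i).powerset,
    (((S.card.factorial : ℝ) * ((N.card - S.card - 1).factorial : ℝ)) / (N.card.factorial : ℝ)) *
      (v (insert i S) - v S)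

/-- The MPW solution: the Shapley value of the average game. -/
noncomputable def MPW (N : Finset ℕ) (w : Game) (i : ℕ) : ℝ := shapley N (avg N w) i

/-- The MPW solution as a solution for TUX games. -/
noncomputable def MPWsol : Sol := fun N w i => MPW N w i

/-- The scaled Dirac TUX game `δ_{T,τ}` on `N`. -/
noncomputable def scaledDirac (N T : Finset ℕ) (τ : Finset (Finset ℕ)) : Game :=
  fun S π => if S = T ∧ π = τ then (pstar (N \ T) τ)⁻¹ else 0

/-- `τ₋S`: remove the players of `S` from each block of `τ`, discarding empty blocks. -/
def partRemove (τ : Finset (Finset ℕ)) (S : Finset ℕ) : Finset (Finset ℕ) :=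
  (τ.image (fun B => B \ S)).erase ∅

/-- The Sobolev-reduced TUX game `w₋ⱼ^{So,φ}` on `N ∖ {j}`. -/
noncomputable def sobRed (N : Finset ℕ) (φ : Sol) (w : Game) (j : ℕ) : Game :=
  fun S π =>
    ((S.card : ℝ) / ((N.card : ℝ) - 1)) * (w (insert j S) π - φ N w j) +
      (1 - (S.card : ℝ) / ((N.card : ℝ) - 1)) * restrict1 N w j S π

/-- The Hart–Mas-Colell reduced TUX game `w₋T^{HM,φ}` on `N ∖ T`. -/
noncomputable def hmRed (N : Finset ℕ) (φ : Sol) (w : Game) (T : Finset ℕ) : Game :=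
  fun S π => w (S ∪ T) π - ∑ j ∈ T, φ (S ∪ T) (restrictSet N w (N \ (S ∪ T))) j

/-- Efficiency for TUX games. -/
def EfficientX (φ : Sol) : Prop :=
  ∀ (N : Finset ℕ) (w : Game), IsTUX w → ∑ i ∈ N, φ N w i = w N ∅

/-- Balanced contributions for TUX games (w.r.t. the restriction operator `r⋆`). -/
def BalancedContributionsX (φ : Sol) : Prop :=
  ∀ (N : Finset ℕ) (w : Game), IsTUX w → ∀ i ∈ N, ∀ j ∈ N,
    φ N w i - φ (N.erase j) (restrict1 N w j) i
      = φ N w j - φ (N.erase i) (restrict1 N w i) j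

/-- 2-standardness for TUX games. -/
def TwoStandardX (φ : Sol) : Prop :=
  ∀ i j : ℕ, i ≠ j → ∀ w : Game, IsTUX w →
    φ {i, j} w i
      = w {i} {({j} : Finset ℕ)}
        + (w {i, j} ∅ - w {j} {({i} : Finset ℕ)} - w {i} {({j} : Finset ℕ)}) / 2

/-- Sobolev consistency for TUX games. -/
def SobolevConsistentX (φ : Sol) : Prop :=
  ∀ (N : Finset ℕ) (w : Game), IsTUX w → ∀ i ∈ N, ∀ j ∈ N, i ≠ j →
    φ N w i = φ (N.erase j) (sobRed N φ w j) i

/-- Hart–Mas-Colell consistency (single-player removal) for TUX games. -/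
def HMConsistentX (φ : Sol) : Prop :=
  ∀ (N : Finset ℕ) (w : Game), IsTUX w → ∀ i ∈ N, ∀ j ∈ N, i ≠ j →
    φ N w i = φ (N.erase j) (hmRed N φ w {j}) i

/-- Set Hart–Mas-Colell consistency (removal of a coalition) for TUX games. -/
def SetHMConsistentX (φ : Sol) : Prop :=
  ∀ (N : Finset ℕ) (w : Game), IsTUX w → ∀ i ∈ N, ∀ T ⊆ N.erase i,
    φ N w i = φ (N \ T) (hmRed N φ w T) i

/-- The finite set of embedded coalitions `(T,τ)` of `N` with `T ≠ ∅`. -/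
def embeddedNE (N : Finset ℕ) : Finset (Finset ℕ × Finset (Finset ℕ)) :=
  (N.powerset ×ˢ N.powerset.powerset).filter
    (fun p => p.1.Nonempty ∧ IsPartition (N \ p.1) p.2)

end TUX

/-!
Splitting off the block that contains a fixed element `x ∈ M` identifies partitions of `M` with
pairs `(A, σ)`, `x ∈ A ⊆ M`, `σ` a partition of `M \ A`. By induction, the total weight
`∑_π ∏_{B ∈ π} (|B| - 1)!` of the partitions of `M` is therefore
`∑_{x ∈ A ⊆ M} (|A| - 1)! (|M| - |A|)!`, and grouping by `|A| = k + 1` this is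
`∑_k C(m-1, k) k! (m-1-k)! = m · (m-1)! = m!`.
-/

namespace TUX

open Nat

theorem mem_partitionsOf {M : Finset ℕ} {π : Finset (Finset ℕ)} :
    π ∈ partitionsOf M ↔ IsPartition M π := by
  refine ⟨fun h => (mem_filter.mp h).2, fun h => mem_filter.mpr ⟨?_, h⟩⟩
  exact mem_powerset.mpr fun B hB => mem_powerset.mpr (h.1 B hB)

theorem partitionsOf_empty : partitionsOf ∅ = {∅} := by
  ext π
  simp only [mem_partitionsOf, mem_singleton]
  refine ⟨fun h => eq_empty_of_forall_notMem fun B hB => ?_, ?_⟩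
  · exact h.2.1 (subset_empty.mp (h.1 B hB) ▸ hB)
  · rintro rfl
    exact ⟨by simp, by simp, by simp⟩

namespace IsPartition

variable {M : Finset ℕ} {π : Finset (Finset ℕ)} {x : ℕ}

theorem filter_mem_eq_singleton (h : IsPartition M π) (hx : x ∈ M) :
    π.filter (fun B => x ∈ B) = {blockOf π x} := by
  obtain ⟨B, hB⟩ := card_eq_one.mp (h.2.2 x hx)
  rw [blockOf, hB, sup_singleton, id]

theorem blockOf_mem_filter (h : IsPartition M π) (hx : x ∈ M) :
    blockOf π x ∈ π.filter (fun B => x ∈ B) := by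
  rw [h.filter_mem_eq_singleton hx]
  exact mem_singleton_self _

theorem blockOf_mem (h : IsPartition M π) (hx : x ∈ M) : blockOf π x ∈ π :=
  (mem_filter.mp (h.blockOf_mem_filter hx)).1

theorem mem_blockOf (h : IsPartition M π) (hx : x ∈ M) : x ∈ blockOf π x :=
  (mem_filter.mp (h.blockOf_mem_filter hx)).2

theorem eq_blockOf (h : IsPartition M π) {B : Finset ℕ} (hB : B ∈ π) (hxB : x ∈ B) :
    B = blockOf π x := by
  have hmem : B ∈ π.filter (fun C => x ∈ C) := mem_filter.mpr ⟨hB, hxB⟩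
  rwa [h.filter_mem_eq_singleton (h.1 B hB hxB), mem_singleton] at hmem

theorem erase_blockOf (h : IsPartition M π) (hx : x ∈ M) :
    IsPartition (M \ blockOf π x) (π.erase (blockOf π x)) := by
  refine ⟨fun B hB y hy => ?_, fun h0 => h.2.1 (mem_of_mem_erase h0), fun y hy => ?_⟩
  · obtain ⟨hBA, hBπ⟩ := mem_erase.mp hB
    refine mem_sdiff.mpr ⟨h.1 B hBπ hy, fun hyA => hBA ?_⟩
    rw [h.eq_blockOf hBπ hy, ← h.eq_blockOf (h.blockOf_mem hx) hyA]
  · obtain ⟨hyM, hyA⟩ := mem_sdiff.mp hy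
    have hA : blockOf π x ∉ π.filter (fun B => y ∈ B) := fun hA => hyA (mem_filter.mp hA).2
    rw [filter_erase, erase_eq_of_notMem hA]
    exact h.2.2 y hyM

end IsPartition

theorem notMem_of_isPartition_sdiff {M A : Finset ℕ} {σ : Finset (Finset ℕ)} {x : ℕ}
    (hxA : x ∈ A) (hσ : IsPartition (M \ A) σ) : A ∉ σ :=
  fun hA => (mem_sdiff.mp (hσ.1 A hA hxA)).2 hxA

theorem isPartition_insert {M A : Finset ℕ} {σ : Finset (Finset ℕ)} {x : ℕ}
    (hAM : A ⊆ M) (hxA : x ∈ A) (hσ : IsPartition (M \ A) σ) :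
    IsPartition M (insert A σ) := by
  refine ⟨fun B hB => ?_, fun h0 => ?_, fun y hy => ?_⟩
  · rcases mem_insert.mp hB with rfl | hB
    · exact hAM
    · exact (hσ.1 B hB).trans sdiff_subset
  · rcases mem_insert.mp h0 with h0 | h0
    · exact notMem_empty x (h0 ▸ hxA)
    · exact hσ.2.1 h0
  · rw [filter_insert]
    by_cases hyA : y ∈ A
    · have hnone : σ.filter (fun B => y ∈ B) = ∅ :=
        filter_eq_empty_iff.mpr fun B hB hyB => (mem_sdiff.mp (hσ.1 B hB hyB)).2 hyA
      simp [hyA, hnone]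
    · rw [if_neg hyA]
      exact hσ.2.2 y (mem_sdiff.mpr ⟨hy, hyA⟩)

theorem sum_partitionsOf_prod_eq {R : Type*} [CommSemiring R] (g : Finset ℕ → R)
    {M : Finset ℕ} {x : ℕ} (hx : x ∈ M) :
    ∑ π ∈ partitionsOf M, ∏ B ∈ π, g B =
      ∑ A ∈ M.powerset.filter (fun A => x ∈ A),
        g A * ∑ σ ∈ partitionsOf (M \ A), ∏ B ∈ σ, g B := by
  simp only [mul_sum]
  rw [sum_sigma']
  refine sum_nbij' (fun π => ⟨blockOf π x, π.erase (blockOf π x)⟩)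
    (fun p => insert p.1 p.2) ?_ ?_ ?_ ?_ ?_
  · intro π hπ
    have hπ := mem_partitionsOf.mp hπ
    simp only [mem_sigma, mem_filter, mem_powerset]
    exact ⟨⟨hπ.1 _ (hπ.blockOf_mem hx), hπ.mem_blockOf hx⟩,
      mem_partitionsOf.mpr (hπ.erase_blockOf hx)⟩
  · rintro ⟨A, σ⟩ hp
    simp only [mem_sigma, mem_filter, mem_powerset, mem_partitionsOf] at hp ⊢
    exact isPartition_insert hp.1.1 hp.1.2 hp.2
  · intro π hπ
    exact insert_erase ((mem_partitionsOf.mp hπ).blockOf_mem hx)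
  · rintro ⟨A, σ⟩ hp
    simp only [mem_sigma, mem_filter, mem_powerset, mem_partitionsOf] at hp
    have hπ := isPartition_insert hp.1.1 hp.1.2 hp.2
    have hblock : blockOf (insert A σ) x = A := (hπ.eq_blockOf (mem_insert_self A σ) hp.1.2).symm
    simp only [hblock, erase_insert (notMem_of_isPartition_sdiff hp.1.2 hp.2)]
  · intro π hπ
    exact (mul_prod_erase π g ((mem_partitionsOf.mp hπ).blockOf_mem hx)).symm

theorem sum_powerset_factorial_mul_factorial {α : Type*} (T : Finset α) :
    ∑ B ∈ T.powerset, B.card ! * (T.card - B.card)! = (T.card + 1)! := by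
  rw [sum_powerset_apply_card (fun k => k ! * (T.card - k)!), Nat.factorial_succ]
  have hterm : ∀ k ∈ range (T.card + 1), T.card.choose k • (k ! * (T.card - k)!) = T.card ! :=
    fun k hk => by
      rw [smul_eq_mul, ← mul_assoc]
      exact Nat.choose_mul_factorial_mul_factorial (Nat.lt_succ_iff.mp (mem_range.mp hk))
  rw [sum_congr rfl hterm, sum_const, card_range, smul_eq_mul]

theorem sum_filter_mem_factorial_mul_factorial {α : Type*} [DecidableEq α] {M : Finset α} {x : α}
    (hx : x ∈ M) :
    ∑ A ∈ M.powerset.filter (fun A => x ∈ A), (A.card - 1)! * (M.card - A.card)! = M.card ! := by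
  have hm : M.card = (M.erase x).card + 1 := (card_erase_add_one hx).symm
  rw [hm, ← sum_powerset_factorial_mul_factorial]
  refine sum_nbij' (fun A => A.erase x) (fun B => insert x B) ?_ ?_ ?_ ?_ ?_
  · intro A hA
    simp only [mem_filter, mem_powerset] at hA ⊢
    exact erase_subset_erase x hA.1
  · intro B hB
    simp only [mem_filter, mem_powerset] at hB ⊢
    exact ⟨insert_subset hx (hB.trans (erase_subset x M)), mem_insert_self x B⟩
  · intro A hA
    exact insert_erase (mem_filter.mp hA).2
  · intro B hB
    exact erase_insert fun hxB => notMem_erase x M (mem_powerset.mp hB hxB)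
  · intro A hA
    obtain ⟨hAM, hxA⟩ := mem_filter.mp hA
    have hpos : 0 < A.card := card_pos.mpr ⟨x, hxA⟩
    have hle : A.card ≤ (M.erase x).card + 1 := hm ▸ card_le_card (mem_powerset.mp hAM)
    rw [card_erase_of_mem hxA]
    congr 2
    omega

theorem sum_partitionsOf_prod_factorial (M : Finset ℕ) :
    ∑ π ∈ partitionsOf M, ∏ B ∈ π, (B.card - 1)! = M.card ! := by
  induction M using strongInductionOn with
  | _ M ih =>
    rcases M.eq_empty_or_nonempty with rfl | ⟨x, hx⟩
    · simp [partitionsOf_empty]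
    rw [sum_partitionsOf_prod_eq _ hx, ← sum_filter_mem_factorial_mul_factorial hx]
    refine sum_congr rfl fun A hA => ?_
    obtain ⟨hAM, hxA⟩ := mem_filter.mp hA
    have hAM := mem_powerset.mp hAM
    rw [ih _ (sdiff_ssubset hAM ⟨x, hxA⟩), card_sdiff_of_subset hAM]

end TUX

open TUX in
theorem pstar_prob_dist_general (N S : Finset ℕ) :
    (∀ π ∈ partitionsOf (N \ S), 0 ≤ pstar (N \ S) π) ∧
      ∑ π ∈ partitionsOf (N \ S), pstar (N \ S) π = 1 := by
  refine ⟨fun π _ => by unfold pstar; positivity, ?_⟩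
  have hfact : ((N \ S).card.factorial : ℝ) ≠ 0 := by exact_mod_cast Nat.factorial_ne_zero _
  simp only [pstar, ← sum_div]
  rw [div_eq_one_iff_eq hfact]
  exact_mod_cast sum_partitionsOf_prod_factorial (N \ S)

open TUX in
/-- For every finite player set `N` and `S ⊆ N`, the Ewens(1)
weights `p*` form a probability distribution on the partitions of `N \ S`. -/
theorem pstar_prob_dist (N S : Finset ℕ) (hS : S ⊆ N) :
    (∀ π ∈ partitionsOf (N \ S), 0 ≤ pstar (N \ S) π) ∧
      ∑ π ∈ partitionsOf (N \ S), pstar (N \ S) π = 1 :=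
  pstar_prob_dist_general N S
end

section
/- The restriction operator r* is path independent: for every TUX game w on player set N and distinct players i, j ∈ N, removing i and then j yields the same game as removing j and then i, i.e., (w_{−i})_{−j} = (w_{−j})_{−i} as TUX games on N\{i,j}. -/
open Finset BigOperators

namespace TUX

lemma blockOf_of_filter_eq {π : Finset (Finset ℕ)} {k : ℕ} {B : Finset ℕ}
    (h : π.filter (fun C => k ∈ C) = {B}) : blockOf π k = B := by
  simp [blockOf, h]

lemma IsPartition.block_spec {M : Finset ℕ} {π : Finset (Finset ℕ)}
    (h : IsPartition M π) {k : ℕ} (hk : k ∈ M) :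
    blockOf π k ∈ π ∧ k ∈ blockOf π k ∧ π.filter (fun C => k ∈ C) = {blockOf π k} := by
  obtain ⟨B, hB⟩ := Finset.card_eq_one.mp (h.2.2 k hk)
  have hBO : blockOf π k = B := blockOf_of_filter_eq hB
  have hBm : B ∈ π.filter (fun C => k ∈ C) := by rw [hB]; exact Finset.mem_singleton_self B
  rw [Finset.mem_filter] at hBm
  exact ⟨by rw [hBO]; exact hBm.1, by rw [hBO]; exact hBm.2, by rw [hBO]; exact hB⟩

lemma IsPartition.eq_blockOf_s1 {M : Finset ℕ} {π : Finset (Finset ℕ)}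
    (h : IsPartition M π) {k : ℕ} (hk : k ∈ M) {B : Finset ℕ}
    (hB : B ∈ π) (hkB : k ∈ B) : B = blockOf π k := by
  have hf := (h.block_spec hk).2.2
  have hmem : B ∈ π.filter (fun C => k ∈ C) := Finset.mem_filter.mpr ⟨hB, hkB⟩
  rw [hf, Finset.mem_singleton] at hmem
  exact hmem

lemma blockOf_insert_singleton_self {π : Finset (Finset ℕ)} {y : ℕ}
    (hy : ∀ C ∈ π, y ∉ C) : blockOf (insert {y} π) y = {y} := by
  apply blockOf_of_filter_eq
  rw [Finset.filter_insert, if_pos (Finset.mem_singleton_self y),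
    Finset.filter_eq_empty_iff.mpr hy]
  simp

lemma blockOf_insert_singleton_ne {π : Finset (Finset ℕ)} {y k : ℕ} (hk : k ≠ y) :
    blockOf (insert {y} π) k = blockOf π k := by
  unfold blockOf
  rw [Finset.filter_insert, if_neg (by simp [hk])]

lemma blockOf_addToBlock_self {π : Finset (Finset ℕ)} {y : ℕ} (B : Finset ℕ)
    (hy : ∀ C ∈ π, y ∉ C) : blockOf (addToBlock π y B) y = insert y B := by
  apply blockOf_of_filter_eq
  unfold addToBlock
  rw [Finset.filter_insert, if_pos (Finset.mem_insert_self y B),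
    Finset.filter_eq_empty_iff.mpr (fun C hC => hy C (Finset.mem_of_mem_erase hC))]
  simp

lemma blockOf_addToBlock_of_mem {M : Finset ℕ} {π : Finset (Finset ℕ)}
    (h : IsPartition M π) {y k : ℕ} {B : Finset ℕ}
    (hy : ∀ C ∈ π, y ∉ C) (hk : k ∈ M) (hB : B = blockOf π k) :
    blockOf (addToBlock π y B) k = insert y B := by
  apply blockOf_of_filter_eq
  have hkB : k ∈ B := by rw [hB]; exact (h.block_spec hk).2.1
  unfold addToBlock
  have hemp : (π.erase B).filter (fun C => k ∈ C) = ∅ := by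
    refine Finset.filter_eq_empty_iff.mpr fun C hC hkC => ?_
    exact (Finset.ne_of_mem_erase hC)
      ((h.eq_blockOf_s1 hk (Finset.mem_of_mem_erase hC) hkC).trans hB.symm)
  rw [Finset.filter_insert, if_pos (Finset.mem_insert_of_mem hkB), hemp]
  simp

lemma blockOf_addToBlock_of_notMem {π : Finset (Finset ℕ)} {y k : ℕ} {B : Finset ℕ}
    (hky : k ≠ y) (hkB : k ∉ B) :
    blockOf (addToBlock π y B) k = blockOf π k := by
  unfold blockOf addToBlock
  rw [Finset.filter_insert, if_neg (by simp [hky, hkB]), Finset.filter_erase,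
    Finset.erase_eq_of_notMem (by simp [hkB])]

lemma addToBlock_insert_singleton {π : Finset (Finset ℕ)} {y : ℕ} (x : ℕ)
    (hyπ : ({y} : Finset ℕ) ∉ π) :
    addToBlock (insert {y} π) x {y} = insert (insert x {y}) π := by
  unfold addToBlock
  rw [Finset.erase_insert hyπ]

lemma addToBlock_insert_of_ne {π : Finset (Finset ℕ)} {y : ℕ} (x : ℕ) {B : Finset ℕ}
    (hne : ({y} : Finset ℕ) ≠ B) :
    addToBlock (insert {y} π) x B = insert {y} (addToBlock π x B) := by
  unfold addToBlock
  rw [Finset.erase_insert_of_ne hne, Finset.insert_comm]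

lemma addToBlock_addToBlock_self {π : Finset (Finset ℕ)} {y : ℕ} (x : ℕ) {B : Finset ℕ}
    (hy : ∀ C ∈ π, y ∉ C) :
    addToBlock (addToBlock π y B) x (insert y B)
      = insert (insert x (insert y B)) (π.erase B) := by
  unfold addToBlock
  rw [Finset.erase_insert
    (fun h => hy _ (Finset.mem_of_mem_erase h) (Finset.mem_insert_self y B))]

lemma addToBlock_addToBlock_of_ne {π : Finset (Finset ℕ)} {y x : ℕ} {B B' : Finset ℕ}
    (hne : insert y B ≠ B') :
    addToBlock (addToBlock π y B) x B'
      = insert (insert x B') (insert (insert y B) ((π.erase B).erase B')) := by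
  unfold addToBlock
  rw [Finset.erase_insert_of_ne hne]

lemma expand_side (w : Game) (S M : Finset ℕ) (π : Finset (Finset ℕ))
    (hπ : IsPartition M π) (x y : ℕ) (hxM : x ∉ M) (hyM : y ∉ M) :
    (w S (insert {x} (insert {y} π)) +
        ∑ k' ∈ insert y M,
          w S (addToBlock (insert {y} π) x (blockOf (insert {y} π) k')))
      + ∑ k ∈ M,
          (w S (insert {x} (addToBlock π y (blockOf π k))) +
            ∑ k' ∈ insert y M,
              w S (addToBlock (addToBlock π y (blockOf π k)) x
                (blockOf (addToBlock π y (blockOf π k)) k')))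
    = w S (insert {x} (insert {y} π))
      + w S (insert (insert x {y}) π)
      + (∑ k ∈ M, w S (insert {y} (addToBlock π x (blockOf π k))))
      + (∑ k ∈ M, w S (insert {x} (addToBlock π y (blockOf π k))))
      + (∑ k ∈ M, w S (insert (insert x (insert y (blockOf π k))) (π.erase (blockOf π k))))
      + ∑ k ∈ M, ∑ k' ∈ M,
          w S (addToBlock (addToBlock π y (blockOf π k)) x
            (blockOf (addToBlock π y (blockOf π k)) k')) := by
  have hyfresh : ∀ C ∈ π, y ∉ C := fun C hC hyC => hyM (hπ.1 C hC hyC)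
  have hyπ : ({y} : Finset ℕ) ∉ π := fun h => hyfresh _ h (Finset.mem_singleton_self y)
  have h0 : ∑ k' ∈ insert y M, w S (addToBlock (insert {y} π) x (blockOf (insert {y} π) k'))
      = w S (insert (insert x {y}) π)
        + ∑ k' ∈ M, w S (insert {y} (addToBlock π x (blockOf π k'))) := by
    rw [Finset.sum_insert hyM, blockOf_insert_singleton_self hyfresh,
      addToBlock_insert_singleton x hyπ]
    congr 1
    refine Finset.sum_congr rfl fun k' hk' => ?_
    have hk'y : k' ≠ y := fun h => hyM (h ▸ hk')
    have hne : ({y} : Finset ℕ) ≠ blockOf π k' := by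
      intro h
      have := (hπ.block_spec hk').2.1
      rw [← h] at this
      exact hk'y (Finset.mem_singleton.mp this)
    rw [blockOf_insert_singleton_ne hk'y, addToBlock_insert_of_ne x hne]
  have h1 : ∀ k ∈ M,
      w S (insert {x} (addToBlock π y (blockOf π k))) +
        ∑ k' ∈ insert y M,
          w S (addToBlock (addToBlock π y (blockOf π k)) x
            (blockOf (addToBlock π y (blockOf π k)) k'))
      = w S (insert {x} (addToBlock π y (blockOf π k)))
        + (w S (insert (insert x (insert y (blockOf π k))) (π.erase (blockOf π k)))
          + ∑ k' ∈ M,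
            w S (addToBlock (addToBlock π y (blockOf π k)) x
              (blockOf (addToBlock π y (blockOf π k)) k'))) := by
    intro k hk
    rw [Finset.sum_insert hyM, blockOf_addToBlock_self (blockOf π k) hyfresh,
      addToBlock_addToBlock_self x hyfresh]
  rw [h0, Finset.sum_congr rfl h1, Finset.sum_add_distrib, Finset.sum_add_distrib]
  ring

lemma LL_symm {M : Finset ℕ} {π : Finset (Finset ℕ)} (hπ : IsPartition M π)
    {x y : ℕ} (hxM : x ∉ M) (hyM : y ∉ M)
    {k k' : ℕ} (hk : k ∈ M) (hk' : k' ∈ M) :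
    addToBlock (addToBlock π y (blockOf π k)) x
        (blockOf (addToBlock π y (blockOf π k)) k')
      = addToBlock (addToBlock π x (blockOf π k')) y
          (blockOf (addToBlock π x (blockOf π k')) k) := by
  have hxfresh : ∀ C ∈ π, x ∉ C := fun C hC h => hxM (hπ.1 C hC h)
  have hyfresh : ∀ C ∈ π, y ∉ C := fun C hC h => hyM (hπ.1 C hC h)
  have hk'y : k' ≠ y := fun h => hyM (h ▸ hk')
  have hkx : k ≠ x := fun h => hxM (h ▸ hk)
  by_cases hmem : k' ∈ blockOf π k
  · have hEq : blockOf π k = blockOf π k' :=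
      hπ.eq_blockOf_s1 hk' (hπ.block_spec hk).1 hmem
    rw [blockOf_addToBlock_of_mem hπ hyfresh hk' hEq,
      addToBlock_addToBlock_self x hyfresh,
      blockOf_addToBlock_of_mem hπ hxfresh hk hEq.symm,
      addToBlock_addToBlock_self y hxfresh, ← hEq, Finset.insert_comm]
  · have hmem' : k ∉ blockOf π k' := by
      intro h
      have h2 : blockOf π k' = blockOf π k :=
        hπ.eq_blockOf_s1 hk (hπ.block_spec hk').1 h
      have := (hπ.block_spec hk').2.1
      rw [h2] at this
      exact hmem this
    have hne1 : insert y (blockOf π k) ≠ blockOf π k' := by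
      intro h
      exact hyfresh _ (hπ.block_spec hk').1 (h ▸ Finset.mem_insert_self y _)
    have hne2 : insert x (blockOf π k') ≠ blockOf π k := by
      intro h
      exact hxfresh _ (hπ.block_spec hk).1 (h ▸ Finset.mem_insert_self x _)
    rw [blockOf_addToBlock_of_notMem hk'y hmem, addToBlock_addToBlock_of_ne hne1,
      blockOf_addToBlock_of_notMem hkx hmem', addToBlock_addToBlock_of_ne hne2,
      Finset.insert_comm, Finset.erase_right_comm]

end TUX

open TUX in
/-- The restriction operator `r⋆` is path independent. -/
theorem restrict_path_independent (N : Finset ℕ) (w : Game) (hw : IsTUX w)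
    (i j : ℕ) (hi : i ∈ N) (hj : j ∈ N) (hij : i ≠ j) :
    ∀ S ⊆ N \ {i, j}, ∀ π, IsPartition ((N \ {i, j}) \ S) π →
      restrict1 (N.erase i) (restrict1 N w i) j S π
        = restrict1 (N.erase j) (restrict1 N w j) i S π := by
  intro S hS π hπ
  set M : Finset ℕ := (N \ {i, j}) \ S with hM
  have hiM : i ∉ M := by simp [hM]
  have hjM : j ∉ M := by simp [hM]
  have hiS : i ∉ S := fun h => by have := hS h; simp at this
  have hjS : j ∉ S := fun h => by have := hS h; simp at this
  have hA : ((N.erase i) \ S).erase j = M := by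
    ext a
    simp only [hM, Finset.mem_erase, Finset.mem_sdiff, Finset.mem_insert,
      Finset.mem_singleton]
    tauto
  have hBB : ((N.erase j) \ S).erase i = M := by
    ext a
    simp only [hM, Finset.mem_erase, Finset.mem_sdiff, Finset.mem_insert,
      Finset.mem_singleton]
    tauto
  have hC : (N \ S).erase i = insert j M := by
    ext a
    by_cases haj : a = j
    · subst haj
      simp [hM, hj, hjS, Ne.symm hij]
    · simp only [hM, Finset.mem_erase, Finset.mem_sdiff, Finset.mem_insert,
        Finset.mem_singleton, haj]
      tauto
  have hD : (N \ S).erase j = insert i M := by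
    ext a
    by_cases hai : a = i
    · subst hai
      simp [hM, hi, hiS, hij]
    · simp only [hM, Finset.mem_erase, Finset.mem_sdiff, Finset.mem_insert,
        Finset.mem_singleton, hai]
      tauto
  simp only [restrict1]
  simp only [hA, hBB, hC, hD, Finset.card_erase_of_mem hi, Finset.card_erase_of_mem hj]
  simp only [← Finset.mul_sum, ← mul_add]
  rw [expand_side w S M π hπ i j hiM hjM, expand_side w S M π hπ j i hjM hiM]
  have e1 : insert ({i} : Finset ℕ) (insert {j} π) = insert {j} (insert {i} π) :=
    Finset.insert_comm _ _ _
  have e2 : (insert i {j} : Finset ℕ) = insert j {i} := Finset.pair_comm i j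
  have e3 : ∑ k ∈ M, w S (insert (insert i (insert j (blockOf π k))) (π.erase (blockOf π k)))
      = ∑ k ∈ M, w S (insert (insert j (insert i (blockOf π k))) (π.erase (blockOf π k))) :=
    Finset.sum_congr rfl fun k hk => by rw [Finset.insert_comm]
  have e4 : (∑ k ∈ M, ∑ k' ∈ M,
        w S (addToBlock (addToBlock π j (blockOf π k)) i
          (blockOf (addToBlock π j (blockOf π k)) k')))
      = ∑ k ∈ M, ∑ k' ∈ M,
          w S (addToBlock (addToBlock π i (blockOf π k)) j
            (blockOf (addToBlock π i (blockOf π k)) k')) := by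
    rw [Finset.sum_comm]
    exact Finset.sum_congr rfl fun a ha => Finset.sum_congr rfl fun b hb => by
      rw [LL_symm hπ hiM hjM hb ha]
  rw [e1, e2, e3, e4]
  ring
end

section
/- For every finite player set N and embedded coalition (T,τ) of N, the auxiliary TU game of the scaled Dirac game δ_{T,τ} equals the Dirac TU game δ_T^N, i.e., (δ_{T,τ})_{−(N\S)}(S,∅) = 1 if S = T and 0 otherwise, for all S ⊆ N. -/
open Finset BigOperators

/-!
Removing a player `i ∈ N \ T` turns the scaled Dirac game at `(T, τ)` into the one at
`(T, τ₋i)`. At `(T, π)` the restriction averages, with weight `1 / |N \ T|`, the worths at the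
partitions obtained by re-inserting `i` into `π`. When `π = τ₋i`, exactly `c` of them equal `τ`
(`c = 1` if `{i}` is a block of `τ`, otherwise `c = |B| - 1` for the block `B ∋ i`), and none do
otherwise; the Ewens weights match, `p*_{R ∖ i}(τ₋i) = |R| p*_R(τ) / c`. After all of `N \ T` is
removed, the worth at `(T, ∅)` is `1 / p*_∅(∅) = 1`, while coalitions other than `T` keep worth `0`.
-/

namespace TUX

section Partition

variable {R : Finset ℕ} {τ : Finset (Finset ℕ)} {i x : ℕ}

theorem IsPartition.filter_mem_eq (h : IsPartition R τ) (hx : x ∈ R) :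
    τ.filter (fun B => x ∈ B) = {blockOf τ x} := by
  obtain ⟨B, hB⟩ := card_eq_one.mp (h.2.2 x hx)
  rw [blockOf, hB, sup_singleton, id]

theorem IsPartition.blockOf_mem_filter_s5 (h : IsPartition R τ) (hx : x ∈ R) :
    blockOf τ x ∈ τ.filter (fun B => x ∈ B) :=
  (h.filter_mem_eq hx).symm ▸ mem_singleton_self _

theorem IsPartition.blockOf_mem_s5 (h : IsPartition R τ) (hx : x ∈ R) : blockOf τ x ∈ τ :=
  (mem_filter.mp (h.blockOf_mem_filter_s5 hx)).1

theorem IsPartition.mem_blockOf_s5 (h : IsPartition R τ) (hx : x ∈ R) : x ∈ blockOf τ x :=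
  (mem_filter.mp (h.blockOf_mem_filter_s5 hx)).2

theorem IsPartition.eq_blockOf_s5 (h : IsPartition R τ) {B : Finset ℕ} (hB : B ∈ τ) (hxB : x ∈ B) :
    B = blockOf τ x := by
  have hmem : B ∈ τ.filter (fun B => x ∈ B) := mem_filter.mpr ⟨hB, hxB⟩
  rwa [h.filter_mem_eq (h.1 B hB hxB), mem_singleton] at hmem

theorem IsPartition.notMem_of_mem_erase_blockOf (h : IsPartition R τ) {B : Finset ℕ}
    (hB : B ∈ τ.erase (blockOf τ i)) : i ∉ B :=
  fun hiB => (mem_erase.mp hB).1 (h.eq_blockOf_s5 (mem_of_mem_erase hB) hiB)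

theorem IsPartition.erase_blockOf_notMem (h : IsPartition R τ) (hi : i ∈ R) :
    (blockOf τ i).erase i ∉ τ.erase (blockOf τ i) := by
  intro hmem
  have hτ : (blockOf τ i).erase i ∈ τ := mem_of_mem_erase hmem
  obtain ⟨x, hx⟩ := nonempty_iff_ne_empty.mpr (ne_of_mem_of_not_mem hτ h.2.1)
  exact (mem_erase.mp hmem).1
    ((h.eq_blockOf_s5 hτ hx).trans (h.eq_blockOf_s5 (h.blockOf_mem_s5 hi) (mem_of_mem_erase hx)).symm)

theorem IsPartition.eq_empty (h : IsPartition ∅ τ) : τ = ∅ :=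
  eq_empty_of_forall_notMem fun B hB => h.2.1 (subset_empty.mp (h.1 B hB) ▸ hB)

theorem IsPartition.isPartition_partRemove (h : IsPartition R τ) (S : Finset ℕ) :
    IsPartition (R \ S) (partRemove τ S) := by
  refine ⟨?_, notMem_erase _ _, fun x hx => card_eq_one.mpr ⟨blockOf τ x \ S, ?_⟩⟩
  · intro C hC
    obtain ⟨B, hB, rfl⟩ := mem_image.mp (mem_of_mem_erase hC)
    exact sdiff_subset_sdiff (h.1 B hB) le_rfl
  · obtain ⟨hxR, hxS⟩ := mem_sdiff.mp hx
    have hxB : x ∈ blockOf τ x \ S := mem_sdiff.mpr ⟨h.mem_blockOf_s5 hxR, hxS⟩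
    ext C
    simp only [partRemove, mem_filter, mem_erase, mem_image, mem_singleton]
    constructor
    · rintro ⟨⟨-, B, hB, rfl⟩, hxC⟩
      rw [← h.eq_blockOf_s5 hB (mem_sdiff.mp hxC).1]
    · rintro rfl
      exact ⟨⟨ne_empty_of_mem hxB, _, h.blockOf_mem_s5 hxR, rfl⟩, hxB⟩

theorem image_sdiff_singleton_eq_self {π : Finset (Finset ℕ)} (hπ : ∀ B ∈ π, i ∉ B) :
    π.image (· \ {i}) = π :=
  (image_congr fun B hB => by simpa using hπ B hB).trans image_id

theorem IsPartition.partRemove_singleton (h : IsPartition R τ) (hi : i ∈ R) :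
    partRemove τ {i} = (insert ((blockOf τ i).erase i) (τ.erase (blockOf τ i))).erase ∅ := by
  rw [partRemove]
  conv_lhs => rw [← insert_erase (h.blockOf_mem_s5 hi)]
  rw [image_insert, sdiff_singleton_eq_erase,
    image_sdiff_singleton_eq_self fun B => h.notMem_of_mem_erase_blockOf]

theorem IsPartition.erase_blockOf_eq_empty_iff (h : IsPartition R τ) (hi : i ∈ R) :
    (blockOf τ i).erase i = ∅ ↔ blockOf τ i = {i} := by
  rw [erase_eq_empty_iff, or_iff_right (ne_empty_of_mem (h.mem_blockOf_s5 hi))]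

theorem IsPartition.partRemove_singleton_of_blockOf_eq (h : IsPartition R τ) (hi : i ∈ R)
    (hBi : blockOf τ i = {i}) : partRemove τ {i} = τ.erase {i} := by
  rw [h.partRemove_singleton hi, (h.erase_blockOf_eq_empty_iff hi).mpr hBi, erase_insert_eq_erase,
    hBi, erase_eq_of_notMem fun h0 => h.2.1 (mem_of_mem_erase h0)]

theorem IsPartition.partRemove_singleton_of_blockOf_ne (h : IsPartition R τ) (hi : i ∈ R)
    (hBi : blockOf τ i ≠ {i}) :
    partRemove τ {i} = insert ((blockOf τ i).erase i) (τ.erase (blockOf τ i)) := by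
  rw [h.partRemove_singleton hi, erase_insert_of_ne (mt (h.erase_blockOf_eq_empty_iff hi).mp hBi),
    erase_eq_of_notMem fun h0 => h.2.1 (mem_of_mem_erase h0)]

theorem IsPartition.insert_singleton_partRemove (h : IsPartition R τ) (hi : i ∈ R)
    (hBi : blockOf τ i = {i}) : insert {i} (partRemove τ {i}) = τ := by
  rw [h.partRemove_singleton_of_blockOf_eq hi hBi, insert_erase (hBi ▸ h.blockOf_mem_s5 hi)]

theorem IsPartition.addToBlock_partRemove (h : IsPartition R τ) (hi : i ∈ R)
    (hBi : blockOf τ i ≠ {i}) :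
    addToBlock (partRemove τ {i}) i ((blockOf τ i).erase i) = τ := by
  rw [h.partRemove_singleton_of_blockOf_ne hi hBi, addToBlock, erase_insert
    (h.erase_blockOf_notMem hi), insert_erase (h.mem_blockOf_s5 hi), insert_erase (h.blockOf_mem_s5 hi)]

end Partition

/-- Unlike partitions of `R`, these families are closed under both ways in which `restrict1`
re-inserts a player. -/
def IsBlockFamily (R : Finset ℕ) (π : Finset (Finset ℕ)) : Prop :=
  ∅ ∉ π ∧ ∀ B ∈ π, B ⊆ R

section BlockFamily

variable {R : Finset ℕ} {π τ : Finset (Finset ℕ)} {i : ℕ}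

theorem blockOf_subset (hπ : ∀ B ∈ π, B ⊆ R) (j : ℕ) : blockOf π j ⊆ R :=
  Finset.sup_le fun B hB => hπ B (mem_filter.mp hB).1

theorem IsBlockFamily.notMem (hπ : IsBlockFamily (R.erase i) π) {B : Finset ℕ} (hB : B ∈ π) :
    i ∉ B :=
  fun hiB => notMem_erase i R (hπ.2 B hB hiB)

theorem IsBlockFamily.insert_singleton (hπ : IsBlockFamily (R.erase i) π) (hi : i ∈ R) :
    IsBlockFamily R (insert {i} π) := by
  refine ⟨?_, fun B hB => ?_⟩
  · rw [mem_insert, not_or]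
    exact ⟨(singleton_ne_empty i).symm, hπ.1⟩
  · rcases mem_insert.mp hB with rfl | hB
    · exact singleton_subset_iff.mpr hi
    · exact (hπ.2 B hB).trans (erase_subset i R)

theorem IsBlockFamily.addToBlock_blockOf (hπ : IsBlockFamily (R.erase i) π) (hi : i ∈ R) (j : ℕ) :
    IsBlockFamily R (addToBlock π i (blockOf π j)) := by
  refine ⟨?_, fun B hB => ?_⟩
  · rw [addToBlock, mem_insert, not_or]
    exact ⟨(insert_ne_empty i _).symm, fun h0 => hπ.1 (mem_of_mem_erase h0)⟩
  · rcases mem_insert.mp hB with rfl | hB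
    · exact insert_subset hi ((blockOf_subset hπ.2 j).trans (erase_subset i R))
    · exact (hπ.2 B (mem_of_mem_erase hB)).trans (erase_subset i R)

theorem IsBlockFamily.partRemove_insert_singleton (hπ : IsBlockFamily (R.erase i) π) :
    partRemove (insert {i} π) {i} = π := by
  rw [partRemove, image_insert, sdiff_self, image_sdiff_singleton_eq_self fun B => hπ.notMem,
    bot_eq_empty, erase_insert hπ.1]

theorem IsBlockFamily.partRemove_addToBlock (hπ : IsBlockFamily (R.erase i) π) {B : Finset ℕ}
    (hB : B ∈ π) : partRemove (addToBlock π i B) {i} = π := by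
  rw [partRemove, addToBlock, image_insert, sdiff_singleton_eq_erase, erase_insert (hπ.notMem hB),
    image_sdiff_singleton_eq_self fun C hC => hπ.notMem (mem_of_mem_erase hC), insert_erase hB,
    erase_eq_of_notMem hπ.1]

theorem IsBlockFamily.eq_partRemove_of_insert_singleton_eq (hπ : IsBlockFamily (R.erase i) π)
    (heq : insert {i} π = τ) : π = partRemove τ {i} := by
  rw [← heq, hπ.partRemove_insert_singleton]

theorem IsBlockFamily.eq_partRemove_of_addToBlock_eq (hτ : IsPartition R τ)
    (hπ : IsBlockFamily (R.erase i) π) {j : ℕ} (heq : addToBlock π i (blockOf π j) = τ) :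
    π = partRemove τ {i} := by
  by_cases hU : blockOf π j = ∅
  · rw [hU, addToBlock, insert_empty, erase_eq_of_notMem hπ.1] at heq
    exact hπ.eq_partRemove_of_insert_singleton_eq heq
  suffices hUπ : blockOf π j ∈ π by rw [← heq, hπ.partRemove_addToBlock hUπ]
  -- `blockOf π j` is the union of the members of `π` containing `j`; each of them other than
  -- `blockOf π j` itself would be a block of `τ` meeting the block `insert i (blockOf π j)`.
  obtain ⟨D, hD⟩ : (π.filter fun B => j ∈ B).Nonempty := by
    rw [nonempty_iff_ne_empty]
    intro h0
    exact hU (by rw [blockOf, h0, sup_empty]; rfl)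
  obtain ⟨hDπ, hjD⟩ := mem_filter.mp hD
  have hDU : D ⊆ blockOf π j := le_sup (f := id) hD
  by_contra hUπ
  have hDτ : D ∈ τ := heq ▸ mem_insert_of_mem (mem_erase.mpr ⟨fun h => hUπ (h ▸ hDπ), hDπ⟩)
  have hUτ : insert i (blockOf π j) ∈ τ := heq ▸ mem_insert_self _ _
  have hDeq : D = insert i (blockOf π j) :=
    (hτ.eq_blockOf_s5 hDτ hjD).trans (hτ.eq_blockOf_s5 hUτ (mem_insert_of_mem (hDU hjD))).symm
  exact hπ.notMem hDπ (hDeq ▸ mem_insert_self i _)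

end BlockFamily

/-- The number of ways in which `restrict1` re-inserts `i` into `partRemove τ {i}` recovering `τ`:
as a singleton if `{i}` is a block of `τ`, otherwise next to any other member of its block. -/
def reinsertionCount (τ : Finset (Finset ℕ)) (i : ℕ) : ℕ :=
  if blockOf τ i = {i} then 1 else ((blockOf τ i).erase i).card

section Reinsertion

variable {R : Finset ℕ} {π τ : Finset (Finset ℕ)} {i : ℕ}

theorem IsPartition.mem_blockOf_of_addToBlock_eq (hτ : IsPartition R τ)
    (hπ : IsPartition (R.erase i) π) {j : ℕ} (hj : j ∈ R.erase i)
    (heq : addToBlock π i (blockOf π j) = τ) : j ∈ blockOf τ i := by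
  have hUτ : insert i (blockOf π j) ∈ τ := heq ▸ mem_insert_self _ _
  exact hτ.eq_blockOf_s5 hUτ (mem_insert_self _ _) ▸ mem_insert_of_mem (hπ.mem_blockOf_s5 hj)

theorem IsPartition.card_reinsertions (hτ : IsPartition R τ) (hi : i ∈ R)
    (hπ : IsBlockFamily (R.erase i) π) :
    (if insert {i} π = τ then 1 else 0) +
        ((R.erase i).filter fun j => addToBlock π i (blockOf π j) = τ).card =
      if π = partRemove τ {i} then reinsertionCount τ i else 0 := by
  by_cases hπτ : π = partRemove τ {i}
  swap
  · rw [if_neg hπτ, if_neg (mt hπ.eq_partRemove_of_insert_singleton_eq hπτ), zero_add,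
      card_eq_zero, filter_eq_empty_iff]
    exact fun j _ heq => hπτ (hπ.eq_partRemove_of_addToBlock_eq hτ heq)
  subst hπτ
  have hpart : IsPartition (R.erase i) (partRemove τ {i}) :=
    sdiff_singleton_eq_erase i R ▸ hτ.isPartition_partRemove {i}
  have hfilter : ((R.erase i).filter fun j =>
      addToBlock (partRemove τ {i}) i (blockOf (partRemove τ {i}) j) = τ) =
      (blockOf τ i).erase i := by
    ext j
    simp only [mem_filter, mem_erase]
    constructor
    · rintro ⟨⟨hji, hjR⟩, heq⟩
      exact ⟨hji, hτ.mem_blockOf_of_addToBlock_eq hpart (mem_erase.mpr ⟨hji, hjR⟩) heq⟩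
    · rintro ⟨hji, hjB⟩
      have hBi : blockOf τ i ≠ {i} := fun h => hji (mem_singleton.mp (h ▸ hjB))
      have hmem : (blockOf τ i).erase i ∈ partRemove τ {i} := by
        rw [hτ.partRemove_singleton_of_blockOf_ne hi hBi]
        exact mem_insert_self _ _
      refine ⟨⟨hji, hτ.1 _ (hτ.blockOf_mem_s5 hi) hjB⟩, ?_⟩
      rw [← hpart.eq_blockOf_s5 hmem (mem_erase.mpr ⟨hji, hjB⟩), hτ.addToBlock_partRemove hi hBi]
  rw [if_pos rfl, hfilter, reinsertionCount]
  split_ifs with hins hBi hBi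
  · rw [hBi, erase_singleton, card_empty]
  · have hsingleton : {i} ∈ τ := hins ▸ mem_insert_self _ _
    exact absurd (hτ.eq_blockOf_s5 hsingleton (mem_singleton_self i)).symm hBi
  · exact absurd (hτ.insert_singleton_partRemove hi hBi) hins
  · rw [zero_add]

theorem IsPartition.inv_pstar_partRemove (hτ : IsPartition R τ) (hi : i ∈ R) :
    (pstar (R.erase i) (partRemove τ {i}))⁻¹ =
      (R.card : ℝ)⁻¹ * reinsertionCount τ i * (pstar R τ)⁻¹ := by
  have hP : ∏ B ∈ τ.erase (blockOf τ i), ((B.card - 1).factorial : ℝ) ≠ 0 :=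
    (prod_pos fun B _ => by positivity).ne'
  obtain ⟨n, hn⟩ : ∃ n, R.card = n + 1 := Nat.exists_eq_add_one.mpr (card_pos.mpr ⟨i, hi⟩)
  obtain ⟨k, hk⟩ : ∃ k, (blockOf τ i).card = k + 1 :=
    Nat.exists_eq_add_one.mpr (card_pos.mpr ⟨i, hτ.mem_blockOf_s5 hi⟩)
  unfold pstar reinsertionCount
  rw [hτ.partRemove_singleton hi, prod_erase _ (by simp), prod_insert (hτ.erase_blockOf_notMem hi),
    ← mul_prod_erase τ _ (hτ.blockOf_mem_s5 hi), card_erase_of_mem hi,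
    card_erase_of_mem (hτ.mem_blockOf_s5 hi), hn, hk]
  rcases k with _ | k
  · rw [if_pos (eq_singleton_iff_unique_mem.mpr ⟨hτ.mem_blockOf_s5 hi,
      fun x hx => card_le_one.mp hk.le x hx i (hτ.mem_blockOf_s5 hi)⟩)]
    simp only [Nat.add_sub_cancel, Nat.factorial_succ]
    push_cast
    field_simp
  · rw [if_neg fun h => by rw [h, card_singleton] at hk; omega]
    simp only [Nat.add_sub_cancel, Nat.factorial_succ]
    push_cast
    field_simp

end Reinsertion

def IsScaledDiracAt (N T : Finset ℕ) (τ : Finset (Finset ℕ)) (w : Game) : Prop :=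
  ∀ π, IsBlockFamily (N \ T) π → w T π = if π = τ then (pstar (N \ T) τ)⁻¹ else 0

section Restriction

variable {N T : Finset ℕ} {τ : Finset (Finset ℕ)} {w : Game}

theorem isScaledDiracAt_scaledDirac : IsScaledDiracAt N T τ (scaledDirac N T τ) := by
  intro π _
  simp [scaledDirac]

theorem IsScaledDiracAt.restrict1 (hT : T ⊆ N) (hτ : IsPartition (N \ T) τ) {i : ℕ}
    (hi : i ∈ N \ T) (hw : IsScaledDiracAt N T τ w) :
    IsScaledDiracAt (N.erase i) T (partRemove τ {i}) (restrict1 N w i) := by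
  intro π hπ
  rw [erase_sdiff_comm] at hπ ⊢
  have hsum : ∑ j ∈ (N \ T).erase i, w T (addToBlock π i (blockOf π j)) =
      (pstar (N \ T) τ)⁻¹ *
        (((N \ T).erase i).filter fun j => addToBlock π i (blockOf π j) = τ).card := by
    rw [← sum_boole, mul_sum]
    refine sum_congr rfl fun j _ => ?_
    rw [hw _ (hπ.addToBlock_blockOf hi j), mul_ite, mul_one, mul_zero]
  have hcard : (N.card : ℝ) - T.card = (N \ T).card := by
    rw [card_sdiff_of_subset hT, Nat.cast_sub (card_le_card hT)]
  calc TUX.restrict1 N w i T π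
      = ((N \ T).card : ℝ)⁻¹ * (pstar (N \ T) τ)⁻¹ *
          (((if insert {i} π = τ then 1 else 0 : ℕ) : ℝ) +
            (((N \ T).erase i).filter fun j => addToBlock π i (blockOf π j) = τ).card) := by
        rw [TUX.restrict1, hcard, hw _ (hπ.insert_singleton hi), hsum]
        split_ifs <;> push_cast <;> ring
    _ = _ := by
        rw [← Nat.cast_add, hτ.card_reinsertions hi hπ, hτ.inv_pstar_partRemove hi]
        split_ifs <;> push_cast <;> ring

theorem IsScaledDiracAt.restrictL_apply_empty {l : List ℕ} (hl : l.Nodup) :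
    ∀ {N : Finset ℕ} {τ : Finset (Finset ℕ)} {w : Game}, l.toFinset = N \ T → T ⊆ N →
      IsPartition (N \ T) τ → IsScaledDiracAt N T τ w → restrictL N w l T ∅ = 1 := by
  induction l with
  | nil =>
    intro N τ w hl hT hτ hw
    rw [List.toFinset_nil] at hl
    have hτ₀ : τ = ∅ := (hl ▸ hτ).eq_empty
    rw [restrictL, hw ∅ ⟨notMem_empty _, fun B hB => absurd hB (notMem_empty B)⟩, if_pos hτ₀.symm,
      ← hl, hτ₀]
    simp [pstar]
  | cons i l ih =>
    intro N τ w hil hT hτ hw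
    obtain ⟨hinl, hl⟩ := List.nodup_cons.mp hl
    have hi : i ∈ N \ T := hil ▸ List.mem_toFinset.mpr List.mem_cons_self
    rw [restrictL]
    refine ih hl ?_ (subset_erase.mpr ⟨hT, (mem_sdiff.mp hi).2⟩) ?_ (hw.restrict1 hT hτ hi)
    · rw [erase_sdiff_comm, ← hil, List.toFinset_cons, erase_insert (by simpa using hinl)]
    · rw [erase_sdiff_comm, ← sdiff_singleton_eq_erase]
      exact hτ.isPartition_partRemove {i}

end Restriction

theorem restrictL_apply_eq_zero {S : Finset ℕ} (l : List ℕ) :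
    ∀ {N : Finset ℕ} {w : Game}, (∀ π, w S π = 0) → ∀ π, restrictL N w l S π = 0 := by
  induction l with
  | nil => exact fun hw => hw
  | cons i l ih =>
    intro N w hw
    exact ih fun π => by simp [restrict1, hw]

end TUX

open TUX in
/-- The auxiliary TU game of a scaled Dirac game is the Dirac TU game. -/
theorem auxGame_scaledDirac (N T : Finset ℕ) (τ : Finset (Finset ℕ))
    (hT : T ⊆ N) (hτ : IsPartition (N \ T) τ) :
    ∀ S ⊆ N, auxGame N (scaledDirac N T τ) S = if S = T then 1 else 0 := by
  intro S _
  unfold auxGame restrictSet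
  split_ifs with hST
  · subst hST
    exact isScaledDiracAt_scaledDirac.restrictL_apply_empty (sort_nodup _ _) (sort_toFinset _ _)
      hT hτ
  · exact restrictL_apply_eq_zero _ (fun π => if_neg fun h => hST h.1) ∅
end
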